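/- The Bell state measurement can be localized with a single shared EPR pair: the rank-one projective POVM {|ψ_c⟩⟨ψ_c|}_{c=1,…,4}, where ψ_1,…,ψ_4 are the columns of the unitary M_BSM (the four Bell states), is 1-ebit localizable. -/

import Mathlib

open Matrix Complex Kronecker
open scoped ComplexOrder

noncomputable section

/-- The identification of `Fin 2 × Fin 2` with `Fin 4`, ordering pairs as 00,01,10,11. -/
def pairEquiv : Fin 2 × Fin 2 ≃ Fin 4 where
  toFun p := ⟨2 * p.1.val + p.2.val, by have h1 := p.1.isLt; have h2 := p.2.isLt; omega⟩
  invFun k := (⟨k.val / 2, by have := k.isLt; omega⟩, ⟨k.val % 2, by omega⟩)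
  left_inv := by decide
  right_inv := by decide

/-- Kronecker product of two 2×2 matrices, as a 4×4 matrix indexed by `Fin 4`
with the ordering 00,01,10,11. -/
def kron (A B : Matrix (Fin 2) (Fin 2) ℂ) : Matrix (Fin 4) (Fin 4) ℂ :=
  Matrix.reindex pairEquiv pairEquiv (A ⊗ₖ B)

def σX : Matrix (Fin 2) (Fin 2) ℂ := !![0, 1; 1, 0]
def σY : Matrix (Fin 2) (Fin 2) ℂ := !![0, -Complex.I; Complex.I, 0]
def σZ : Matrix (Fin 2) (Fin 2) ℂ := !![1, 0; 0, -1]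

/-- The Pauli matrices indexed as σ₀ = I₂, σ₁ = σ_X, σ₂ = σ_Y, σ₃ = σ_Z. -/
def pauli (a : Fin 4) : Matrix (Fin 2) (Fin 2) ℂ :=
  if a = 0 then 1 else if a = 1 then σX else if a = 2 then σY else σZ

/-- A 4×4 complex matrix is a permutation matrix with phases if there is a permutation
`π` of the indices and unit-modulus phases `φ j` with `P (π j) j = φ j` and all other
entries zero. -/
def PermPhase (P : Matrix (Fin 4) (Fin 4) ℂ) : Prop :=
  ∃ (π : Equiv.Perm (Fin 4)) (φ : Fin 4 → ℂ),
    (∀ j, ‖φ j‖ = 1) ∧ ∀ i j, P i j = if i = π j then φ j else 0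

/-- The partial-trace map `T(A,B)` over the `n`-ebit ancillas:
`T(A,B)_{(i,j),(i',j')} = 2^{-n} ∑_{l,k} A_{(i,l),(i',k)} · B_{(j,l),(j',k)}`. -/
def Tmap (n : ℕ)
    (A B : Matrix (Fin 2 × Fin (2 ^ n)) (Fin 2 × Fin (2 ^ n)) ℂ) :
    Matrix (Fin 2 × Fin 2) (Fin 2 × Fin 2) ℂ :=
  Matrix.of fun p q =>
    ((2 : ℂ) ^ n)⁻¹ * ∑ l : Fin (2 ^ n), ∑ k : Fin (2 ^ n),
      A (p.1, l) (q.1, k) * B (p.2, l) (q.2, k)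

/-- A POVM `Msr` on ℂ²⊗ℂ² is `n`-ebit localizable if there are finite local POVMs
`A` and `B` on system ⊗ ancilla and a classical post-processing `p(c|a,b)` reproducing
all POVM elements via the shared state `(φ⁺)^{⊗n}`. -/
def NEbitLocalizable (n : ℕ) {C : Type} [Fintype C]
    (Msr : C → Matrix (Fin 2 × Fin 2) (Fin 2 × Fin 2) ℂ) : Prop :=
  ∃ (nA nB : ℕ)
    (A : Fin nA → Matrix (Fin 2 × Fin (2 ^ n)) (Fin 2 × Fin (2 ^ n)) ℂ)
    (B : Fin nB → Matrix (Fin 2 × Fin (2 ^ n)) (Fin 2 × Fin (2 ^ n)) ℂ)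
    (p : C → Fin nA → Fin nB → ℝ),
    (∀ a, (A a).PosSemidef) ∧ (∑ a, A a = 1) ∧
    (∀ b, (B b).PosSemidef) ∧ (∑ b, B b = 1) ∧
    (∀ c a b, 0 ≤ p c a b ∧ p c a b ≤ 1) ∧
    (∀ a b, ∑ c, p c a b = 1) ∧
    (∀ c, Msr c = ∑ a, ∑ b, (p c a b : ℂ) • Tmap n (A a) (B b))

/-- The rank-one projective POVM whose elements are the projectors onto the columns
of the unitary `M`. -/
def projPOVM (M : Matrix (Fin 4) (Fin 4) ℂ) (c : Fin 4) :
    Matrix (Fin 2 × Fin 2) (Fin 2 × Fin 2) ℂ :=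
  Matrix.of fun p q => M (pairEquiv p) c * star (M (pairEquiv q) c)

/-- The Bell state measurement. -/
def M_BSM : Matrix (Fin 4) (Fin 4) ℂ :=
  ((Real.sqrt 2 : ℂ))⁻¹ • !![1,1,0,0; 0,0,1,1; 0,0,1,-1; 1,-1,0,0]

/-!
Alice and Bob each measure their qubit together with their half of the EPR pair in the Bell
basis and announce outcomes `a` and `b`; the output is `a ^^^ b`. Reshaping a vector on
`ℂ² ⊗ ℂ²` into a 2 × 2 matrix, the ancilla trace sends `|u⟩⟨u| ⊗ |v⟩⟨v|` to `½ |w⟩⟨w|` with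
`w = u vᵀ`. The reshaped Bell states are `1/√2` times `1, Z, X, ZX`, which multiply like `(ℤ/2)²`
up to sign, so each pair of outcomes yields `¼ P_{a ^^^ b}` and the four pairs with
`a ^^^ b = c` add up to `P_c`.
-/

theorem vecMulVec_smul_self_star {ι R : Type*} [CommSemiring R] [StarRing R] (s : R)
    (w : ι → R) : vecMulVec (s • w) (star (s • w)) = (s * star s) • vecMulVec w (star w) := by
  ext p q
  simp only [vecMulVec_apply, Pi.smul_apply, Pi.star_apply, smul_eq_mul, star_mul',
    Matrix.smul_apply]
  ring

def ancillaContract {n : ℕ} (u v : Fin 2 × Fin (2 ^ n) → ℂ) (p : Fin 2 × Fin 2) : ℂ :=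
  ∑ l, u (p.1, l) * v (p.2, l)

theorem Tmap_vecMulVec (n : ℕ) (u v : Fin 2 × Fin (2 ^ n) → ℂ) :
    Tmap n (vecMulVec u (star u)) (vecMulVec v (star v)) =
      ((2 : ℂ) ^ n)⁻¹ • vecMulVec (ancillaContract u v) (star (ancillaContract u v)) := by
  ext p q
  simp only [Tmap, of_apply, Matrix.smul_apply, vecMulVec_apply, smul_eq_mul, ancillaContract,
    Pi.star_apply, star_sum, star_mul', Finset.sum_mul_sum]
  congr 1
  refine Finset.sum_congr rfl fun l _ => Finset.sum_congr rfl fun k _ => ?_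
  ring

def pairCol (M : Matrix (Fin 4) (Fin 4) ℂ) (c : Fin 4) (p : Fin 2 × Fin 2) : ℂ :=
  M (pairEquiv p) c

theorem projPOVM_eq_vecMulVec (M : Matrix (Fin 4) (Fin 4) ℂ) (c : Fin 4) :
    projPOVM M c = vecMulVec (pairCol M c) (star (pairCol M c)) := rfl

theorem projPOVM_posSemidef (M : Matrix (Fin 4) (Fin 4) ℂ) (c : Fin 4) :
    (projPOVM M c).PosSemidef := by
  rw [projPOVM_eq_vecMulVec]
  exact posSemidef_vecMulVec_self_star _

theorem sum_projPOVM_of_mem_unitaryGroup {M : Matrix (Fin 4) (Fin 4) ℂ}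
    (hM : M ∈ unitaryGroup (Fin 4) ℂ) : ∑ c, projPOVM M c = 1 := by
  ext p q
  have h := congr_fun₂ (mem_unitaryGroup_iff.mp hM) (pairEquiv p) (pairEquiv q)
  simpa [Matrix.sum_apply, projPOVM, mul_apply, one_apply, star_apply] using h

theorem sum_sum_ite_xor_smul {E : Type*} [AddCommGroup E] [Module ℂ E] (G : Fin 4 → E)
    (c : Fin 4) :
    ∑ a : Fin 4, ∑ b : Fin 4, ((if c = a ^^^ b then 1 else 0 : ℝ) : ℂ) • (4 : ℂ)⁻¹ • G (a ^^^ b) =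
      G c := by
  have hcancel : ∀ a b : Fin 4, a ^^^ (a ^^^ b) = b := xor_cancel_left (α := Fin (2 ^ 2))
  have hxor : ∀ a b : Fin 4, c = a ^^^ b ↔ b = a ^^^ c := fun a b => by
    constructor <;> rintro rfl <;> exact (hcancel _ _).symm
  simp only [hxor, apply_ite (fun r : ℝ => (r : ℂ)), Complex.ofReal_one, Complex.ofReal_zero,
    ite_smul, one_smul, zero_smul, Finset.sum_ite_eq', Finset.mem_univ, if_true, hcancel]
  rw [Finset.sum_const, Finset.card_univ, Fintype.card_fin, ← Nat.cast_smul_eq_nsmul ℂ, smul_smul]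
  norm_num

theorem inv_sqrt_two_mul_self : ((Real.sqrt 2 : ℂ))⁻¹ * ((Real.sqrt 2 : ℂ))⁻¹ = 2⁻¹ := by
  rw [← mul_inv, ← Complex.ofReal_mul, Real.mul_self_sqrt zero_le_two, Complex.ofReal_ofNat]

def M_BSM_int : Matrix (Fin 4) (Fin 4) ℤ := !![1,1,0,0; 0,0,1,1; 0,0,1,-1; 1,-1,0,0]

theorem M_BSM_eq : M_BSM = ((Real.sqrt 2 : ℂ))⁻¹ • M_BSM_int.map (Int.cast) := by
  ext i j
  fin_cases i <;> fin_cases j <;> simp [M_BSM, M_BSM_int]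

theorem M_BSM_int_mul_transpose : M_BSM_int * M_BSM_intᵀ = 2 := by decide

theorem M_BSM_mem_unitaryGroup : M_BSM ∈ unitaryGroup (Fin 4) ℂ := by
  rw [mem_unitaryGroup_iff, M_BSM_eq, star_smul, star_eq_conjTranspose, smul_mul_smul_comm,
    star_inv₀, Complex.star_def, Complex.conj_ofReal, inv_sqrt_two_mul_self]
  have hstar : (M_BSM_int.map ((↑) : ℤ → ℂ))ᴴ = M_BSM_intᵀ.map (↑) := by
    ext i j
    simp
  have hmap : M_BSM_int.map ((↑) : ℤ → ℂ) * M_BSM_intᵀ.map (↑) = 2 := by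
    have h := congrArg (Int.castRingHom ℂ).mapMatrix M_BSM_int_mul_transpose
    rwa [map_mul, map_ofNat] at h
  rw [hstar, hmap]
  ext i j
  simp [ofNat_apply, one_apply]

def bellMat (c : Fin 4) : Matrix (Fin 2) (Fin 2) ℤ :=
  Matrix.of fun i l => M_BSM_int (pairEquiv (i, l)) c

-- `bellMat (2 * x + z) = Z ^ z * X ^ x`, and `X`, `Z` are symmetric and anticommute.
theorem bellMat_mul_transpose (a b : Fin 4) :
    bellMat a * (bellMat b)ᵀ = bellMat (a ^^^ b) ∨
      bellMat a * (bellMat b)ᵀ = -bellMat (a ^^^ b) := by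
  revert a b
  decide

theorem pairCol_M_BSM (c : Fin 4) (p : Fin 2 × Fin 2) :
    pairCol M_BSM c p = ((Real.sqrt 2 : ℂ))⁻¹ * bellMat c p.1 p.2 := by
  simp [pairCol, M_BSM_eq, bellMat]

theorem ancillaContract_pairCol_M_BSM (a b : Fin 4) :
    ∃ s : ℂ, s * star s = 2⁻¹ ∧
      ancillaContract (n := 1) (pairCol M_BSM a) (pairCol M_BSM b) =
        s • pairCol M_BSM (a ^^^ b) := by
  have hcontract : ∀ p, ancillaContract (n := 1) (pairCol M_BSM a) (pairCol M_BSM b) p =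
      2⁻¹ * ((bellMat a * (bellMat b)ᵀ) p.1 p.2 : ℤ) := fun p => by
    change ∑ l : Fin 2, _ = _
    simp only [pairCol_M_BSM, mul_apply, transpose_apply, Fin.sum_univ_two]
    push_cast
    linear_combination ((bellMat a p.1 0 : ℂ) * bellMat b p.2 0 + bellMat a p.1 1 * bellMat b p.2 1) *
      inv_sqrt_two_mul_self
  rcases bellMat_mul_transpose a b with h | h
  · refine ⟨((Real.sqrt 2 : ℂ))⁻¹, by simpa using inv_sqrt_two_mul_self, funext fun p => ?_⟩
    rw [hcontract, h, Pi.smul_apply, pairCol_M_BSM, smul_eq_mul, ← mul_assoc,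
      inv_sqrt_two_mul_self]
  · refine ⟨-((Real.sqrt 2 : ℂ))⁻¹, by simpa using inv_sqrt_two_mul_self, funext fun p => ?_⟩
    rw [hcontract, h, Pi.smul_apply, pairCol_M_BSM, smul_eq_mul, Matrix.neg_apply, Int.cast_neg]
    linear_combination (bellMat (a ^^^ b) p.1 p.2 : ℂ) * inv_sqrt_two_mul_self

theorem Tmap_projPOVM_M_BSM (a b : Fin 4) :
    Tmap 1 (projPOVM M_BSM a) (projPOVM M_BSM b) = (4 : ℂ)⁻¹ • projPOVM M_BSM (a ^^^ b) := by
  obtain ⟨s, hs, hw⟩ := ancillaContract_pairCol_M_BSM a b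
  rw [projPOVM_eq_vecMulVec, projPOVM_eq_vecMulVec, Tmap_vecMulVec, hw, vecMulVec_smul_self_star,
    hs, smul_smul, projPOVM_eq_vecMulVec]
  norm_num

/-- The Bell state measurement is 1-ebit localizable. -/
theorem bsm_one_ebit_localizable : NEbitLocalizable 1 (projPOVM M_BSM) := by
  refine ⟨4, 4, projPOVM M_BSM, projPOVM M_BSM, fun c a b => if c = a ^^^ b then 1 else 0,
    projPOVM_posSemidef M_BSM, sum_projPOVM_of_mem_unitaryGroup M_BSM_mem_unitaryGroup,
    projPOVM_posSemidef M_BSM, sum_projPOVM_of_mem_unitaryGroup M_BSM_mem_unitaryGroup,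
    fun c a b => by dsimp only; split_ifs <;> norm_num, fun a b => by simp, fun c => ?_⟩
  simp only [Tmap_projPOVM_M_BSM]
  exact (sum_sum_ite_xor_smul (projPOVM M_BSM) c).symm
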